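/- Let Y, Y' be Young diagrams contained in Y_{m,n}. The following are equivalent: (1) there exists a box (i,j) ∈ Y such that Y' = Y∖h_Y(i,j); (2) there exist integers −m < l ≤ r < n such that d(Y') = d(Y)_{[l,r]}. Moreover, in this case l = j − i' and r = j' − i, where (i',j) is the bottom box of the j-th column of Y and (i,j') is the rightmost box of the i-th row of Y. -/

import Mathlib

open Finset

/-- The rectangular Young diagram `Y_{m,n}` (boxes are 1-based pairs `(i,j)`). -/
def rect (m n : ℕ) : Finset (ℕ × ℕ) := Finset.Icc 1 m ×ˢ Finset.Icc 1 n

/-- `Y` is a Young diagram: a finite set of 1-based boxes, downward closed. -/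
def IsYD (Y : Finset (ℕ × ℕ)) : Prop :=
  (∀ p ∈ Y, 1 ≤ p.1 ∧ 1 ≤ p.2) ∧
  (∀ p ∈ Y, ∀ q : ℕ × ℕ, 1 ≤ q.1 → 1 ≤ q.2 → q.1 ≤ p.1 → q.2 ≤ p.2 → q ∈ Y)

/-- `d_k(Y)`: the number of boxes of `Y` on the `k`-th diagonal `j - i = k`. -/
def dk (Y : Finset (ℕ × ℕ)) (k : ℤ) : ℤ :=
  ((Y.filter fun p => (p.2 : ℤ) - (p.1 : ℤ) = k).card : ℤ)

/-- The set `D_{m,n}` of diagonal sequences: non-negative, vanishing outside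
`(-m, n)`, and satisfying the adjacency condition. -/
def Dseq (m n : ℕ) (a : ℤ → ℤ) : Prop :=
  (∀ k : ℤ, 0 ≤ a k) ∧
  (∀ k : ℤ, k ≤ -(m : ℤ) → a k = 0) ∧
  (∀ k : ℤ, (n : ℤ) ≤ k → a k = 0) ∧
  (∀ i : ℤ, -(m : ℤ) < i → i ≤ 0 → a (i - 1) ≤ a i ∧ a i ≤ a (i - 1) + 1) ∧
  (∀ i : ℤ, 0 < i → i ≤ (n : ℤ) → a i ≤ a (i - 1) ∧ a (i - 1) ≤ a i + 1)

/-- `a_{[l,r]}`: subtract `1` from the components indexed by `l ≤ k ≤ r`. -/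
def cut (a : ℤ → ℤ) (l r : ℤ) : ℤ → ℤ := fun k => if l ≤ k ∧ k ≤ r then a k - 1 else a k

/-- The pair `(x,y)` sitting at positions `(k-1,k)` satisfies the adjacency condition. -/
def adjPair (k x y : ℤ) : Prop := if k ≤ 0 then x ≤ y ∧ y ≤ x + 1 else y ≤ x ∧ x ≤ y + 1

/-- `(a_{k-1}, a_k)` is a left bulge, `a_{k-1} ↘ a_k`. -/
def leftBulge (a : ℤ → ℤ) (k : ℤ) : Prop :=
  adjPair k (a (k - 1)) (a k) ∧ adjPair k (a (k - 1) - 1) (a k)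

/-- `(a_{k-1}, a_k)` is a right bulge, `a_{k-1} ↗ a_k`. -/
def rightBulge (a : ℤ → ℤ) (k : ℤ) : Prop :=
  adjPair k (a (k - 1)) (a k) ∧ adjPair k (a (k - 1)) (a k - 1)

/-- The map `E` duplicating the `c`-th component of a sequence. -/
def Emap (c : ℤ) (a : ℤ → ℤ) : ℤ → ℤ := fun k => if k ≤ c then a k else a (k - 1)

def el (c k : ℤ) : ℤ := if k ≤ c then k else k + 1

def er (c k : ℤ) : ℤ := if k < c then k else k + 1

/-- The unimodal numbering `α_{m,n}(i,j) = min (j-i+m) (i-j+n)`. -/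
def unimodal (m n : ℕ) (p : ℕ × ℕ) : ℤ :=
  min ((p.2 : ℤ) - (p.1 : ℤ) + m) ((p.1 : ℤ) - (p.2 : ℤ) + n)

/-- `A(X)`: the multiset of unimodal numbers of the boxes of `X`. -/
def Amul (m n : ℕ) (X : Finset (ℕ × ℕ)) : Multiset ℤ := X.val.map (unimodal m n)

/-- The hook of the box `(i,j)` in `Y`. -/
def hook (Y : Finset (ℕ × ℕ)) (i j : ℕ) : Finset (ℕ × ℕ) :=
  Y.filter fun p => (p.1 = i ∧ j ≤ p.2) ∨ (p.2 = j ∧ i ≤ p.1)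

/-- After removing the hook of `(i,j)`, boxes strictly south-east of `(i,j)` move
up-left by one step. -/
def shiftBox (i j : ℕ) (p : ℕ × ℕ) : ℕ × ℕ :=
  if i < p.1 ∧ j < p.2 then (p.1 - 1, p.2 - 1) else p

/-- The Young diagram `Y ∖ h_Y(i,j)` obtained by removing the hook of `(i,j)`. -/
def removeHook (Y : Finset (ℕ × ℕ)) (i j : ℕ) : Finset (ℕ × ℕ) :=
  (Y \ hook Y i j).image (shiftBox i j)

/-- One move of MHRG(m,n): remove a hook; if the resulting diagram has a hook with
the same multiset of unimodal numbers, one such hook must also be removed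
(this second removal happens at most once). -/
def Move (m n : ℕ) (Y Y' : Finset (ℕ × ℕ)) : Prop :=
  ∃ i j : ℕ, (i, j) ∈ Y ∧
    ((Y' = removeHook Y i j ∧
        ¬∃ i' j' : ℕ, (i', j') ∈ removeHook Y i j ∧
          Amul m n (hook (removeHook Y i j) i' j') = Amul m n (hook Y i j)) ∨
      (∃ i' j' : ℕ, (i', j') ∈ removeHook Y i j ∧
        Amul m n (hook (removeHook Y i j) i' j') = Amul m n (hook Y i j) ∧
        Y' = removeHook (removeHook Y i j) i' j'))

/-- `T(Y_{m,n})`: the positions of MHRG(m,n) reachable from the starting position. -/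
def Reach (m n : ℕ) (Y : Finset (ℕ × ℕ)) : Prop :=
  Relation.ReflTransGen (Move m n) (rect m n) Y

/-- `O(Y)`: the set of options of a position `Y` in MHRG(m,n). -/
def Opt (m n : ℕ) (Y : Finset (ℕ × ℕ)) : Set (Finset (ℕ × ℕ)) := {Y' | Move m n Y Y'}

lemma card_removeHook_lt (Y : Finset (ℕ × ℕ)) (i j : ℕ) (h : (i, j) ∈ Y) :
    (removeHook Y i j).card < Y.card := by
  have hsub : hook Y i j ⊆ Y := Finset.filter_subset _ _
  have hmem : (i, j) ∈ hook Y i j :=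
    Finset.mem_filter.mpr ⟨h, Or.inl ⟨rfl, le_rfl⟩⟩
  have h1 : (removeHook Y i j).card ≤ (Y \ hook Y i j).card := Finset.card_image_le
  have h2 : (Y \ hook Y i j).card = Y.card - (hook Y i j).card := by
    rw [Finset.card_sdiff, Finset.inter_eq_left.mpr hsub]
  have h3 : 0 < (hook Y i j).card := Finset.card_pos.mpr ⟨_, hmem⟩
  have h4 : (hook Y i j).card ≤ Y.card := Finset.card_le_card hsub
  omega

lemma move_card_lt {m n : ℕ} {Y Y' : Finset (ℕ × ℕ)} (h : Move m n Y Y') :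
    Y'.card < Y.card := by
  obtain ⟨i, j, hij, hc⟩ := h
  rcases hc with ⟨rfl, -⟩ | ⟨i', j', hij', -, rfl⟩
  · exact card_removeHook_lt Y i j hij
  · exact (card_removeHook_lt _ i' j' hij').trans (card_removeHook_lt Y i j hij)

/-- The minimal excludant. -/
noncomputable def mex (s : Set ℕ) : ℕ := sInf {k | k ∉ s}

/-- The Grundy value of a position of MHRG(m,n). -/
noncomputable def grundy (m n : ℕ) (Y : Finset (ℕ × ℕ)) : ℕ :=
  mex {g : ℕ | ∃ Y', ∃ _ : Move m n Y Y', grundy m n Y' = g}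
termination_by Y.card
decreasing_by exact move_card_lt (by assumption)

/-- The two-row Young diagram `(λ₁, λ₂)`. -/
def tworow (a b : ℕ) : Finset (ℕ × ℕ) :=
  ({1} : Finset ℕ) ×ˢ Finset.Icc 1 a ∪ ({2} : Finset ℕ) ×ˢ Finset.Icc 1 b

/-- `S` is a shifted Young diagram: rows are intervals `[i, λ_i]` with `λ` strictly
decreasing. -/
def IsShifted (S : Finset (ℕ × ℕ)) : Prop :=
  (∀ p ∈ S, 1 ≤ p.1 ∧ p.1 ≤ p.2) ∧
  (∀ p ∈ S, ∀ j' : ℕ, p.1 ≤ j' → j' ≤ p.2 → (p.1, j') ∈ S) ∧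
  (∀ p ∈ S, 2 ≤ p.1 → (p.1 - 1, p.2 + 1) ∈ S)

/-- The shifted Young diagram of a (strictly decreasing, positive) list of row lengths. -/
def shiftedOf (l : List ℕ) : Finset (ℕ × ℕ) :=
  (Finset.range l.length).biUnion fun i =>
    ({i + 1} : Finset ℕ) ×ˢ Finset.Icc (i + 1) (l.getD i 0)

/-- The staircase `S_n = (n, n-1, …, 1)`. -/
def staircase (n : ℕ) : List ℕ := (List.range n).map fun i => n - i

/-- The shifted hook of the box `(i,j)` in `S` (box, arm, leg and tail). -/
def shook (S : Finset (ℕ × ℕ)) (i j : ℕ) : Finset (ℕ × ℕ) :=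
  S.filter fun p => (p.1 = i ∧ j ≤ p.2) ∨ (p.2 = j ∧ i ≤ p.1) ∨ (p.1 = j + 1 ∧ j < p.2)

/-- The shifting of boxes performed after removing the shifted hook of `(i,j)`. -/
def sShiftBox (i j : ℕ) (p : ℕ × ℕ) : ℕ × ℕ :=
  if i < p.1 ∧ p.1 < j + 1 ∧ j < p.2 then (p.1 - 1, p.2 - 1)
  else if j + 1 < p.1 then (p.1 - 2, p.2 - 2)
  else p

/-- The shifted Young diagram obtained by removing the shifted hook of `(i,j)`. -/
def sRemoveHook (S : Finset (ℕ × ℕ)) (i j : ℕ) : Finset (ℕ × ℕ) :=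
  (S \ shook S i j).image (sShiftBox i j)

/-- One move of HRG on shifted Young diagrams: remove one hook. -/
def SMove (S S' : Finset (ℕ × ℕ)) : Prop :=
  ∃ i j : ℕ, (i, j) ∈ S ∧ S' = sRemoveHook S i j

lemma card_sRemoveHook_lt (S : Finset (ℕ × ℕ)) (i j : ℕ) (h : (i, j) ∈ S) :
    (sRemoveHook S i j).card < S.card := by
  have hsub : shook S i j ⊆ S := Finset.filter_subset _ _
  have hmem : (i, j) ∈ shook S i j :=
    Finset.mem_filter.mpr ⟨h, Or.inl ⟨rfl, le_rfl⟩⟩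
  have h1 : (sRemoveHook S i j).card ≤ (S \ shook S i j).card := Finset.card_image_le
  have h2 : (S \ shook S i j).card = S.card - (shook S i j).card := by
    rw [Finset.card_sdiff, Finset.inter_eq_left.mpr hsub]
  have h3 : 0 < (shook S i j).card := Finset.card_pos.mpr ⟨_, hmem⟩
  have h4 : (shook S i j).card ≤ S.card := Finset.card_le_card hsub
  omega

lemma smove_card_lt {S S' : Finset (ℕ × ℕ)} (h : SMove S S') : S'.card < S.card := by
  obtain ⟨i, j, hij, rfl⟩ := h
  exact card_sRemoveHook_lt S i j hij

/-- The Grundy value of a position of HRG on shifted Young diagrams. -/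
noncomputable def sgrundy (S : Finset (ℕ × ℕ)) : ℕ :=
  mex {g : ℕ | ∃ S', ∃ _ : SMove S S', sgrundy S' = g}
termination_by S.card
decreasing_by exact smove_card_lt (by assumption)

/-- `OH(Y)` for a two-row diagram `Y = (λ₁,λ₂)`: the results of single hook removals. -/
def OH (l1 l2 : ℕ) : Set (Finset (ℕ × ℕ)) :=
  {Y | ∃ a : ℕ, l2 ≤ a ∧ a < l1 ∧ Y = tworow a l2} ∪
  {Y | ∃ b : ℕ, b < l2 ∧ Y = tworow l1 b} ∪
  {Y | ∃ a : ℕ, a < l2 ∧ Y = tworow (l2 - 1) a}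


/-!
In a Young diagram the boxes of the diagonal `j - i = k` are its first `d_k` boxes from the
top-left end, so a diagram is determined by `d`, and `d` satisfies the adjacency condition. The
hook of `(i, j)` meets exactly the diagonals `j - i', …, j' - i`, each once, and the boxes sliding
up-left stay on their diagonal: this gives (1) ⇒ (2), and since `a_{[l,r]}` determines `l ≤ r`,
also the values of `l` and `r`. Conversely, if `d(Y') = d(Y)_{[l,r]}`, the adjacency condition
for `d(Y')` forces the last boxes of diagonals `l` and `r` of `Y` to end a column and a row, and
removing the hook at the corner they span gives a diagram with diagonal sequence `d(Y')`.
-/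

theorem Finset.exists_le_mem_succ_notMem {s : Finset ℕ} {a : ℕ} (ha : a ∈ s) :
    ∃ b, a ≤ b ∧ b ∈ s ∧ b + 1 ∉ s :=
  ⟨s.max' ⟨a, ha⟩, s.le_max' a ha, s.max'_mem _,
    fun h => (s.le_max' _ h).not_gt (Nat.lt_succ_self _)⟩

theorem cut_eq_cut_iff {a : ℤ → ℤ} {l r l' r' : ℤ} (h : l ≤ r) :
    cut a l r = cut a l' r' ↔ l = l' ∧ r = r' := by
  refine ⟨fun hcut => ?_, by rintro ⟨rfl, rfl⟩; rfl⟩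
  have hl := congrFun hcut l
  have hr := congrFun hcut r
  have hl' := congrFun hcut l'
  have hr' := congrFun hcut r'
  simp only [cut] at hl hr hl' hr'
  split_ifs at hl hr hl' hr' <;> omega

/-- The `t`-th box of the diagonal `j - i = k`, counted from its top-left end. -/
def diagBox (k t : ℤ) : ℕ × ℕ := ((t - min k 0).toNat, (t + max k 0).toNat)

theorem dk_nonneg (Y : Finset (ℕ × ℕ)) (k : ℤ) : 0 ≤ dk Y k := Int.natCast_nonneg _

theorem dk_sdiff_of_subset {X Y : Finset (ℕ × ℕ)} (h : X ⊆ Y) (k : ℤ) :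
    dk (Y \ X) k = dk Y k - dk X k := by
  have hsub := filter_subset_filter (fun p : ℕ × ℕ => (p.2 : ℤ) - p.1 = k) h
  have hfilter : {p ∈ Y \ X | (p.2 : ℤ) - p.1 = k} =
      {p ∈ Y | (p.2 : ℤ) - p.1 = k} \ {p ∈ X | (p.2 : ℤ) - p.1 = k} := by
    ext p
    simp only [mem_sdiff, mem_filter]
    tauto
  rw [dk, hfilter, card_sdiff_of_subset hsub, Nat.cast_sub (card_le_card hsub)]
  rfl

namespace IsYD

variable {Y : Finset (ℕ × ℕ)}

/-- On a diagonal `(a, b) ↦ min a b` is injective, and the boxes of `Y` on it are those with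
`min a b = 1, …, d_k(Y)`. -/
theorem mem_iff_min_le_dk (hY : IsYD Y) (a b : ℕ) :
    (a, b) ∈ Y ↔ 1 ≤ a ∧ 1 ≤ b ∧ (min a b : ℤ) ≤ dk Y ((b : ℤ) - a) := by
  constructor
  · intro h
    obtain ⟨ha, hb⟩ := hY.1 _ h
    refine ⟨ha, hb, ?_⟩
    have key : #(range (min a b)) ≤ #{p ∈ Y | (p.2 : ℤ) - p.1 = (b : ℤ) - a} := by
      refine card_le_card_of_injOn (fun s => (a - s, b - s)) ?_ ?_
      · intro s hs
        simp only [coe_range, Set.mem_Iio, coe_filter, Set.mem_ofPred_eq] at hs ⊢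
        exact ⟨hY.2 _ h _ (by omega) (by omega) (by omega) (by omega), by omega⟩
      · intro s hs t ht hst
        simp only [coe_range, Set.mem_Iio, Prod.mk.injEq] at hs ht hst
        omega
    rw [card_range] at key
    unfold dk
    omega
  · rintro ⟨ha, hb, hmin⟩
    by_contra hab
    have key : #{p ∈ Y | (p.2 : ℤ) - p.1 = (b : ℤ) - a} ≤ #(Icc 1 (min a b - 1)) := by
      refine card_le_card_of_injOn (fun p => min p.1 p.2) ?_ ?_
      · rintro ⟨p1, p2⟩ hp
        simp only [coe_filter, Set.mem_ofPred_eq, coe_Icc, Set.mem_Icc] at hp ⊢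
        obtain ⟨hpY, hpd⟩ := hp
        have := hY.1 _ hpY
        refine ⟨by omega, ?_⟩
        by_contra hc
        exact hab (hY.2 _ hpY (a, b) ha hb (by omega) (by omega))
      · rintro ⟨p1, p2⟩ hp ⟨q1, q2⟩ hq hpq
        simp only [coe_filter, Set.mem_ofPred_eq, Prod.mk.injEq] at hp hq hpq ⊢
        omega
    simp only [dk, Nat.card_Icc] at hmin key
    omega

theorem ext_dk {Z : Finset (ℕ × ℕ)} (hY : IsYD Y) (hZ : IsYD Z) (h : dk Y = dk Z) : Y = Z := by
  ext ⟨a, b⟩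
  rw [hY.mem_iff_min_le_dk, hZ.mem_iff_min_le_dk, h]

theorem diagBox_mem_iff (hY : IsYD Y) {k t : ℤ} (ht : 1 ≤ t) : diagBox k t ∈ Y ↔ t ≤ dk Y k := by
  rw [diagBox, hY.mem_iff_min_le_dk]
  have hk : ((t + max k 0).toNat : ℤ) - (t - min k 0).toNat = k := by omega
  rw [hk]
  omega

theorem le_dk_of_le_dk (hY : IsYD Y) {k k' t t' : ℤ} (ht' : 1 ≤ t')
    (hle : diagBox k' t' ≤ diagBox k t) (h : t ≤ dk Y k) : t' ≤ dk Y k' := by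
  obtain ⟨hle1, hle2⟩ := hle
  simp only [diagBox] at hle1 hle2
  have ht : 1 ≤ t := by omega
  rw [← hY.diagBox_mem_iff ht] at h
  rw [← hY.diagBox_mem_iff ht']
  exact hY.2 _ h _ (by simp only [diagBox]; omega) (by simp only [diagBox]; omega) hle1 hle2

theorem adjPair_dk (hY : IsYD Y) (k : ℤ) : adjPair k (dk Y (k - 1)) (dk Y k) := by
  have hnn := dk_nonneg Y
  unfold adjPair
  split_ifs with hk
  · constructor
    · rcases le_or_gt (dk Y (k - 1)) 0 with h | h
      · linarith [hnn k]
      · exact hY.le_dk_of_le_dk (k := k - 1) h (by simp only [diagBox, Prod.mk_le_mk]; omega)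
          le_rfl
    · rcases le_or_gt (dk Y k) 1 with h | h
      · linarith [hnn (k - 1)]
      · have := hY.le_dk_of_le_dk (k := k) (k' := k - 1) (t := dk Y k) (t' := dk Y k - 1)
          (by omega) (by simp only [diagBox, Prod.mk_le_mk]; omega) le_rfl
        omega
  · constructor
    · rcases le_or_gt (dk Y k) 0 with h | h
      · linarith [hnn (k - 1)]
      · exact hY.le_dk_of_le_dk (k := k) h (by simp only [diagBox, Prod.mk_le_mk]; omega)
          le_rfl
    · rcases le_or_gt (dk Y (k - 1)) 1 with h | h
      · linarith [hnn k]
      · have := hY.le_dk_of_le_dk (k := k - 1) (k' := k) (t := dk Y (k - 1))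
          (t' := dk Y (k - 1) - 1) (by omega) (by simp only [diagBox, Prod.mk_le_mk]; omega) le_rfl
        omega

end IsYD

section Hook

variable {Y : Finset (ℕ × ℕ)} {i j : ℕ}

theorem mem_removeHook {a b : ℕ} :
    (a, b) ∈ removeHook Y i j ↔
      ((a, b) ∈ Y ∧ ¬(a = i ∧ j ≤ b) ∧ ¬(b = j ∧ i ≤ a) ∧ ¬(i < a ∧ j < b)) ∨
      ((a + 1, b + 1) ∈ Y ∧ i ≤ a ∧ j ≤ b) := by
  simp only [removeHook, hook, mem_image, mem_sdiff, mem_filter, not_and, not_or]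
  constructor
  · rintro ⟨⟨p1, p2⟩, ⟨hpY, hpH⟩, hps⟩
    have hH := hpH hpY
    simp only [shiftBox] at hps
    split_ifs at hps with hc <;> simp only [Prod.mk.injEq] at hps
    · right
      obtain ⟨rfl, rfl⟩ : p1 = a + 1 ∧ p2 = b + 1 := by omega
      exact ⟨hpY, by omega, by omega⟩
    · left
      obtain ⟨rfl, rfl⟩ := hps
      exact ⟨hpY, by tauto, by tauto, by tauto⟩
  · rintro (⟨h1, h2, h3, h4⟩ | ⟨h1, h2, h3⟩)
    · exact ⟨(a, b), ⟨h1, fun _ => ⟨by tauto, by tauto⟩⟩, if_neg (by tauto)⟩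
    · exact ⟨(a + 1, b + 1), ⟨h1, fun _ => ⟨by omega, by omega⟩⟩, by simp [shiftBox]; omega⟩

theorem isYD_removeHook (hY : IsYD Y) (hij : (i, j) ∈ Y) : IsYD (removeHook Y i j) := by
  have hi := (hY.1 _ hij).1
  have hj := (hY.1 _ hij).2
  constructor
  · rintro ⟨a, b⟩ h
    rcases mem_removeHook.1 h with ⟨h, -⟩ | ⟨-, h2, h3⟩
    · exact hY.1 _ h
    · exact ⟨by omega, by omega⟩
  · rintro ⟨a, b⟩ h ⟨c, d⟩ hc hd hca hdb
    dsimp only at hc hd hca hdb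
    rw [mem_removeHook] at h ⊢
    rcases h with ⟨h1, h2, h3, h4⟩ | ⟨h1, h2, h3⟩
    · exact Or.inl ⟨hY.2 _ h1 (c, d) hc hd hca hdb, by omega, by omega, by omega⟩
    · by_cases hcd : i ≤ c ∧ j ≤ d
      · exact Or.inr ⟨hY.2 _ h1 (c + 1, d + 1) (by omega) (by omega) (by omega) (by omega), hcd⟩
      · exact Or.inl ⟨hY.2 _ h1 (c, d) hc hd (by omega) (by omega), by omega, by omega, by omega⟩

/-- A box that slides up-left cannot land on a box that stays, since that one would lie
on the arm or leg, i.e. in the hook. -/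
theorem injOn_shiftBox : Set.InjOn (shiftBox i j) ↑(Y \ hook Y i j) := by
  rintro ⟨p1, p2⟩ hp ⟨q1, q2⟩ hq hpq
  simp only [coe_sdiff, Set.mem_sdiff, mem_coe, hook, mem_filter, not_and, not_or] at hp hq
  have hp' := hp.2 hp.1
  have hq' := hq.2 hq.1
  simp only [shiftBox] at hpq
  split_ifs at hpq <;> simp only [Prod.mk.injEq] at hpq ⊢ <;> omega

theorem dk_removeHook_eq_dk_sdiff (k : ℤ) : dk (removeHook Y i j) k = dk (Y \ hook Y i j) k := by
  simp only [dk, removeHook, filter_image]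
  rw [card_image_of_injOn ((injOn_shiftBox (Y := Y)).mono (coe_subset.2 (filter_subset _ _)))]
  congr 2
  refine filter_congr fun p _ => ?_
  simp only [shiftBox]
  split_ifs <;> omega

end Hook

section HookEnds

variable {Y : Finset (ℕ × ℕ)} {i j i' j' : ℕ}

theorem IsYD.mem_col_iff (hY : IsYD Y) (h1 : (i', j) ∈ Y) (h2 : (i' + 1, j) ∉ Y) (t : ℕ) :
    (t, j) ∈ Y ↔ 1 ≤ t ∧ t ≤ i' := by
  have hj := (hY.1 _ h1).2
  refine ⟨fun ht => ⟨(hY.1 _ ht).1, ?_⟩, fun ht => hY.2 _ h1 (t, j) ht.1 hj ht.2 le_rfl⟩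
  by_contra hc
  exact h2 (hY.2 _ ht _ (by omega) hj (by omega) le_rfl)

theorem IsYD.mem_row_iff (hY : IsYD Y) (h3 : (i, j') ∈ Y) (h4 : (i, j' + 1) ∉ Y) (t : ℕ) :
    (i, t) ∈ Y ↔ 1 ≤ t ∧ t ≤ j' := by
  have hi := (hY.1 _ h3).1
  refine ⟨fun ht => ⟨(hY.1 _ ht).2, ?_⟩, fun ht => hY.2 _ h3 (i, t) hi ht.1 le_rfl ht.2⟩
  by_contra hc
  exact h4 (hY.2 _ ht _ hi (by omega) le_rfl (by omega))

theorem IsYD.mem_hook_iff (hY : IsYD Y) (h1 : (i', j) ∈ Y) (h2 : (i' + 1, j) ∉ Y)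
    (h3 : (i, j') ∈ Y) (h4 : (i, j' + 1) ∉ Y) {a b : ℕ} :
    (a, b) ∈ hook Y i j ↔ (a = i ∧ j ≤ b ∧ b ≤ j') ∨ (b = j ∧ i ≤ a ∧ a ≤ i') := by
  have hi := (hY.1 _ h3).1
  have hj := (hY.1 _ h1).2
  simp only [hook, mem_filter]
  constructor
  · rintro ⟨hab, ⟨rfl, hb⟩ | ⟨rfl, ha⟩⟩
    · exact Or.inl ⟨rfl, hb, ((hY.mem_row_iff h3 h4 b).1 hab).2⟩
    · exact Or.inr ⟨rfl, ha, ((hY.mem_col_iff h1 h2 a).1 hab).2⟩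
  · rintro (⟨rfl, hb, hb'⟩ | ⟨rfl, ha, ha'⟩)
    · exact ⟨(hY.mem_row_iff h3 h4 b).2 ⟨by omega, hb'⟩, Or.inl ⟨rfl, hb⟩⟩
    · exact ⟨(hY.mem_col_iff h1 h2 a).2 ⟨by omega, ha'⟩, Or.inr ⟨rfl, ha⟩⟩

/-- Walking the hook from the bottom of its leg to the end of its arm, `j - i` increases by one
at each step. -/
theorem IsYD.dk_hook (hY : IsYD Y) (h1 : (i', j) ∈ Y) (h2 : (i' + 1, j) ∉ Y)
    (h3 : (i, j') ∈ Y) (h4 : (i, j' + 1) ∉ Y) (k : ℤ) :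
    dk (hook Y i j) k = if (j : ℤ) - i' ≤ k ∧ k ≤ (j' : ℤ) - i then 1 else 0 := by
  have hfilter : {p ∈ hook Y i j | (p.2 : ℤ) - p.1 = k} =
      if (j : ℤ) - i' ≤ k ∧ k ≤ (j' : ℤ) - i then
        {if (j : ℤ) - i ≤ k then (i, (i + k).toNat) else ((j - k).toNat, j)} else ∅ := by
    have hi := (hY.1 _ h3).1
    have hj := (hY.1 _ h1).2
    have hcorner := (hY.mem_col_iff h1 h2 i).symm.trans (hY.mem_row_iff h3 h4 j)
    ext ⟨a, b⟩
    rw [mem_filter, hY.mem_hook_iff h1 h2 h3 h4]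
    split_ifs <;> simp only [mem_singleton, Prod.mk.injEq, notMem_empty, iff_false] <;> omega
  rw [dk, hfilter]
  split_ifs <;> simp

theorem IsYD.dk_removeHook (hY : IsYD Y) (h1 : (i', j) ∈ Y) (h2 : (i' + 1, j) ∉ Y)
    (h3 : (i, j') ∈ Y) (h4 : (i, j' + 1) ∉ Y) :
    dk (removeHook Y i j) = cut (dk Y) ((j : ℤ) - i') ((j' : ℤ) - i) := by
  funext k
  rw [dk_removeHook_eq_dk_sdiff, dk_sdiff_of_subset (X := hook Y i j) (filter_subset _ Y),
    hY.dk_hook h1 h2 h3 h4, cut]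
  split_ifs <;> ring

end HookEnds

section Ends

variable {Y : Finset (ℕ × ℕ)} {i j : ℕ}

theorem exists_col_end (h : (i, j) ∈ Y) : ∃ i', i ≤ i' ∧ (i', j) ∈ Y ∧ (i' + 1, j) ∉ Y := by
  have hmem : ∀ t, t ∈ {p ∈ Y | p.2 = j}.image Prod.fst ↔ (t, j) ∈ Y := by simp
  simpa only [hmem] using Finset.exists_le_mem_succ_notMem ((hmem i).2 h)

theorem exists_row_end (h : (i, j) ∈ Y) : ∃ j', j ≤ j' ∧ (i, j') ∈ Y ∧ (i, j' + 1) ∉ Y := by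
  have hmem : ∀ t, t ∈ {p ∈ Y | p.1 = i}.image Prod.snd ↔ (i, t) ∈ Y := by simp
  simpa only [hmem] using Finset.exists_le_mem_succ_notMem ((hmem j).2 h)

end Ends

theorem IsYD.exists_dk_removeHook_eq_cut {m n : ℕ} {Y : Finset (ℕ × ℕ)} {i j : ℕ} (hY : IsYD Y)
    (hYsub : Y ⊆ rect m n) (hij : (i, j) ∈ Y) :
    ∃ l r : ℤ, -(m : ℤ) < l ∧ l ≤ r ∧ r < n ∧ dk (removeHook Y i j) = cut (dk Y) l r := by
  obtain ⟨i', hii', h1, h2⟩ := exists_col_end hij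
  obtain ⟨j', hjj', h3, h4⟩ := exists_row_end hij
  have hi' := hYsub h1
  have hj' := hYsub h3
  have hij' := hY.1 _ hij
  simp only [rect, mem_product, mem_Icc] at hi' hj' hij'
  exact ⟨j - i', j' - i, by omega, by omega, by omega, hY.dk_removeHook h1 h2 h3 h4⟩

/-- The last boxes `A` of diagonal `l` and `B` of diagonal `r` of `Y` are the bottom of their
column and the end of their row, for otherwise `d(Y')` would violate the adjacency condition at
`l` or at `r + 1`; the hook of the corner box `(B.1, A.2)` then runs from `A` to `B`. -/
theorem IsYD.exists_removeHook_of_dk_eq_cut {Y Y' : Finset (ℕ × ℕ)} {l r : ℤ} (hY : IsYD Y)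
    (hY' : IsYD Y') (hlr : l ≤ r) (h : dk Y' = cut (dk Y) l r) :
    ∃ i j : ℕ, (i, j) ∈ Y ∧ Y' = removeHook Y i j := by
  have hcut : ∀ k, dk Y' k = cut (dk Y) l r k := congrFun h
  have hdl := hcut l
  have hdr := hcut r
  have hdl' := hcut (l - 1)
  have hdr' := hcut (r + 1)
  have hadjl := hY'.adjPair_dk l
  have hadjr := hY'.adjPair_dk (r + 1)
  simp only [cut, adjPair, add_sub_cancel_right] at hdl hdr hdl' hdr' hadjl hadjr
  have := dk_nonneg Y' l
  have := dk_nonneg Y' r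
  set dl := dk Y l
  set dr := dk Y r
  have hA : ((dl - min l 0).toNat, (dl + max l 0).toNat) ∈ Y :=
    (hY.diagBox_mem_iff (by split_ifs at hdl <;> omega)).2 le_rfl
  have hB : ((dr - min r 0).toNat, (dr + max r 0).toNat) ∈ Y :=
    (hY.diagBox_mem_iff (by split_ifs at hdr <;> omega)).2 le_rfl
  have hA' : ((dl - min l 0).toNat + 1, (dl + max l 0).toNat) ∉ Y := fun hmem => by
    have := ((hY.mem_iff_min_le_dk _ _).1 hmem).2.2
    rw [show ((dl + max l 0).toNat : ℤ) - ((dl - min l 0).toNat + 1 : ℕ) = l - 1 by omega] at this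
    split_ifs at hdl hdl' hadjl <;> omega
  have hB' : ((dr - min r 0).toNat, (dr + max r 0).toNat + 1) ∉ Y := fun hmem => by
    have := ((hY.mem_iff_min_le_dk _ _).1 hmem).2.2
    rw [show ((dr + max r 0).toNat + 1 : ℕ) - ((dr - min r 0).toNat : ℤ) = r + 1 by omega] at this
    split_ifs at hdr hdr' hadjr <;> omega
  have hC : ((dr - min r 0).toNat, (dl + max l 0).toNat) ∈ Y := by
    rcases le_or_gt (dl + max l 0) (dr + max r 0) with hc | hc
    · exact hY.2 _ hB _ (by omega) (by omega) le_rfl (by omega)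
    · exact hY.2 _ hA _ (by omega) (by omega) (by omega) le_rfl
  refine ⟨_, _, hC, hY'.ext_dk (isYD_removeHook hY hC) ?_⟩
  rw [h, hY.dk_removeHook hA hA' hB hB']
  congr 1 <;> omega

theorem stmt3_general (m n : ℕ)
    (Y Y' : Finset (ℕ × ℕ)) (hY : IsYD Y) (hYsub : Y ⊆ rect m n)
    (hY' : IsYD Y') :
    ((∃ i j : ℕ, (i, j) ∈ Y ∧ Y' = removeHook Y i j) ↔
      (∃ l r : ℤ, -(m : ℤ) < l ∧ l ≤ r ∧ r < (n : ℤ) ∧ dk Y' = cut (dk Y) l r)) ∧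
    (∀ i j : ℕ, (i, j) ∈ Y → Y' = removeHook Y i j →
      ∀ l r : ℤ, -(m : ℤ) < l → l ≤ r → r < (n : ℤ) → dk Y' = cut (dk Y) l r →
      ∀ i' j' : ℕ, (i', j) ∈ Y → (i' + 1, j) ∉ Y → (i, j') ∈ Y → (i, j' + 1) ∉ Y →
        l = (j : ℤ) - (i' : ℤ) ∧ r = (j' : ℤ) - (i : ℤ)) := by
  refine ⟨⟨?_, ?_⟩, ?_⟩
  · rintro ⟨i, j, hij, rfl⟩
    exact hY.exists_dk_removeHook_eq_cut hYsub hij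
  · rintro ⟨l, r, -, hlr, -, h⟩
    exact hY.exists_removeHook_of_dk_eq_cut hY' hlr h
  · rintro i j - rfl l r - hlr - h i' j' h1 h2 h3 h4
    exact (cut_eq_cut_iff hlr).1 (h.symm.trans (hY.dk_removeHook h1 h2 h3 h4))

theorem stmt3 (m n : ℕ) (hm : 1 ≤ m) (hn : 1 ≤ n)
    (Y Y' : Finset (ℕ × ℕ)) (hY : IsYD Y) (hYsub : Y ⊆ rect m n)
    (hY' : IsYD Y') (hY'sub : Y' ⊆ rect m n) :
    ((∃ i j : ℕ, (i, j) ∈ Y ∧ Y' = removeHook Y i j) ↔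
      (∃ l r : ℤ, -(m : ℤ) < l ∧ l ≤ r ∧ r < (n : ℤ) ∧ dk Y' = cut (dk Y) l r)) ∧
    (∀ i j : ℕ, (i, j) ∈ Y → Y' = removeHook Y i j →
      ∀ l r : ℤ, -(m : ℤ) < l → l ≤ r → r < (n : ℤ) → dk Y' = cut (dk Y) l r →
      ∀ i' j' : ℕ, (i', j) ∈ Y → (i' + 1, j) ∉ Y → (i, j') ∈ Y → (i, j' + 1) ∉ Y →
        l = (j : ℤ) - (i' : ℤ) ∧ r = (j' : ℤ) - (i : ℤ)) :=
  stmt3_general m n Y Y' hY hYsub hY'
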